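/- Let S be a 1-synchronizable system, τ ∈ Tr₀(S), and a₁,…,a_n messages all with the same source peer such that τ·!a₁⋯!a_n ∈ Tr_n(S). Then τ·!a₁·?a₁·!a₂·?a₂⋯!a_n·?a_n ∈ Tr₀(S). -/

import Mathlib

/-! Communicating finite state machines: messages, traces, systems. -/

structure MessageSet where
  msgs : Finset ℕ
  p : ℕ
  src : ℕ → ℕ
  dst : ℕ → ℕ

def MessageSet.WF (M : MessageSet) : Prop :=
  1 ≤ M.p ∧ ∀ a ∈ M.msgs, M.src a ≠ M.dst a ∧ M.src a < M.p ∧ M.dst a < M.p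

inductive Act where
  | send (a : ℕ)
  | recv (a : ℕ)
deriving DecidableEq

abbrev Trace := List Act

def Act.msg : Act → ℕ
  | .send a => a
  | .recv a => a

def peerOf (M : MessageSet) : Act → ℕ
  | .send a => M.src a
  | .recv a => M.dst a

/-- Send projection: the sequence of messages sent in a trace. -/
def sendProj (τ : Trace) : List ℕ :=
  τ.filterMap (fun α => match α with | .send a => some a | .recv _ => none)

/-- Projection of a trace on the actions of peer `i`. -/
def projPeer (M : MessageSet) (i : ℕ) (τ : Trace) : Trace :=
  τ.filter (fun α => peerOf M α = i)

def sentOn (M : MessageSet) (i j : ℕ) (τ : Trace) : List ℕ :=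
  τ.filterMap (fun α => match α with
    | .send a => if M.src a = i ∧ M.dst a = j then some a else none
    | .recv _ => none)

def recvOn (M : MessageSet) (i j : ℕ) (τ : Trace) : List ℕ :=
  τ.filterMap (fun α => match α with
    | .recv a => if M.src a = i ∧ M.dst a = j then some a else none
    | .send _ => none)

/-- A trace is FIFO if on every channel, in every prefix, the receives form a
prefix of the sends. -/
def Fifo (M : MessageSet) (τ : Trace) : Prop :=
  ∀ τ', τ' <+: τ → ∀ i j, recvOn M i j τ' <+: sentOn M i j τ'

/-- `k`-bounded FIFO trace: the buffer of each channel never exceeds `k`. -/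
def BoundedFifo (M : MessageSet) (k : ℕ) (τ : Trace) : Prop :=
  Fifo M τ ∧ ∀ τ', τ' <+: τ → ∀ i j,
    (sentOn M i j τ').length ≤ (recvOn M i j τ').length + k

/-- `!?a₁ ⬝ !?a₂ ⋯ !?aₙ` -/
def syncOf (l : List ℕ) : Trace := l.flatMap (fun a => [Act.send a, Act.recv a])

def Synchronous (τ : Trace) : Prop := ∃ l : List ℕ, τ = syncOf l

def CausalEquiv (M : MessageSet) (τ₁ τ₂ : Trace) : Prop :=
  Fifo M τ₁ ∧ Fifo M τ₂ ∧ ∀ i, projPeer M i τ₁ = projPeer M i τ₂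

/-- A system of communicating machines: for each peer `i`, an initial state and
a transition relation (all states are accepting). -/
structure System where
  init : ℕ → ℕ
  delta : ℕ → ℕ → Act → ℕ → Prop

/-- Well-formedness: peer `i` performs only actions of peer `i`, on messages of `M`. -/
def System.WF (S : System) (M : MessageSet) : Prop :=
  ∀ i q α q', S.delta i q α q' → peerOf M α = i ∧ α.msg ∈ M.msgs

/-- The machines are finite-state. -/
def System.FiniteDelta (S : System) : Prop :=
  Set.Finite {x : ℕ × ℕ × Act × ℕ | S.delta x.1 x.2.1 x.2.2.1 x.2.2.2}

/-- A configuration: local states, and one FIFO buffer per channel `(i,j)`. -/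
abbrev Config := (ℕ → ℕ) × (ℕ → ℕ → List ℕ)

def Stable (c : Config) : Prop := ∀ i j, c.2 i j = []

def Step (M : MessageSet) (S : System) (c : Config) : Act → Config → Prop
  | .send a, c' =>
      S.delta (M.src a) (c.1 (M.src a)) (.send a) (c'.1 (M.src a)) ∧
      (∀ k, k ≠ M.src a → c'.1 k = c.1 k) ∧
      c'.2 (M.src a) (M.dst a) = c.2 (M.src a) (M.dst a) ++ [a] ∧
      (∀ k l, ¬(k = M.src a ∧ l = M.dst a) → c'.2 k l = c.2 k l)
  | .recv a, c' =>
      S.delta (M.dst a) (c.1 (M.dst a)) (.recv a) (c'.1 (M.dst a)) ∧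
      (∀ k, k ≠ M.dst a → c'.1 k = c.1 k) ∧
      c.2 (M.src a) (M.dst a) = a :: c'.2 (M.src a) (M.dst a) ∧
      (∀ k l, ¬(k = M.src a ∧ l = M.dst a) → c'.2 k l = c.2 k l)

inductive Exec (M : MessageSet) (S : System) : Config → Trace → Config → Prop
  | refl (c : Config) : Exec M S c [] c
  | step {c c' c'' : Config} {α : Act} {τ : Trace} :
      Step M S c α c' → Exec M S c' τ c'' → Exec M S c (α :: τ) c''

def initConfig (S : System) : Config := (S.init, fun _ _ => [])

def TraceOf (M : MessageSet) (S : System) (τ : Trace) : Prop :=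
  ∃ c, Exec M S (initConfig S) τ c

/-- `Trk M S 0` = synchronous traces; `Trk M S k` (`k ≥ 1`) = `k`-bounded traces. -/
def Trk (M : MessageSet) (S : System) : ℕ → Trace → Prop
  | 0, τ => TraceOf M S τ ∧ Synchronous τ
  | (k+1), τ => TraceOf M S τ ∧ BoundedFifo M (k+1) τ

def Trω (M : MessageSet) (S : System) (τ : Trace) : Prop := ∃ k, Trk M S k τ

/-- Two traces are `S`-equivalent if they lead from the initial configuration to
a common configuration. -/
def SEquiv (M : MessageSet) (S : System) (τ₁ τ₂ : Trace) : Prop :=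
  ∃ c, Exec M S (initConfig S) τ₁ c ∧ Exec M S (initConfig S) τ₂ c

/-- Send-trace language. -/
def STw (M : MessageSet) (S : System) (T : Trace → Prop) : Set (List ℕ) :=
  {w | ∃ τ, T τ ∧ sendProj τ = w}

/-- Send traces enriched with the reached stable configurations. -/
def STc (M : MessageSet) (S : System) (T : Trace → Prop) :
    Set (List ℕ ⊕ List ℕ × Config) :=
  {x | (∃ τ, T τ ∧ x = Sum.inl (sendProj τ)) ∨
       (∃ τ c, T τ ∧ Exec M S (initConfig S) τ c ∧ Stable c ∧
          x = Sum.inr (sendProj τ, c))}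

def kSync (M : MessageSet) (S : System) (k : ℕ) : Prop :=
  STc M S (Trk M S 0) = STc M S (Trk M S k)

def Synchronizable (M : MessageSet) (S : System) : Prop :=
  STc M S (Trk M S 0) = STc M S (Trω M S)

def LangSync (M : MessageSet) (S : System) : Prop :=
  STw M S (Trk M S 0) = STw M S (Trω M S)

inductive Shuffle : List Act → List Act → List Act → Prop
  | nil : Shuffle [] [] []
  | left {u v w : List Act} (a : Act) : Shuffle u v w → Shuffle (a :: u) v (a :: w)
  | right {u v w : List Act} (b : Act) : Shuffle u v w → Shuffle u (b :: v) (b :: w)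

inductive NShuffle : List ℕ → List ℕ → List ℕ → Prop
  | nil : NShuffle [] [] []
  | left {u v w : List ℕ} (a : ℕ) : NShuffle u v w → NShuffle (a :: u) v (a :: w)
  | right {u v w : List ℕ} (b : ℕ) : NShuffle u v w → NShuffle u (b :: v) (b :: w)

inductive PPath (S : System) (i : ℕ) : ℕ → Trace → Prop
  | nil (q : ℕ) : PPath S i q []
  | cons {q q' : ℕ} {α : Act} {w : Trace} :
      S.delta i q α q' → PPath S i q' w → PPath S i q (α :: w)

/-- The language of peer `i` (all states accepting). -/
def Lang (S : System) (i : ℕ) : Set Trace := {w | PPath S i (S.init i) w}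

def prefCl (L : Set Trace) : Set Trace := {w | ∃ v ∈ L, w <+: v}

def OrientedRing (M : MessageSet) : Prop :=
  1 ≤ M.p ∧ ∀ i j, (∃ a ∈ M.msgs, M.src a = i ∧ M.dst a = j) ↔
    (i < M.p ∧ j = (i + 1) % M.p)

/-! ### Auxiliary machinery for the proof -/

/-- Local path with recorded end state. -/
inductive PathTo (S : System) (i : ℕ) : ℕ → Trace → ℕ → Prop
  | nil (q : ℕ) : PathTo S i q [] q
  | cons {q q' q'' : ℕ} {α : Act} {w : Trace} :
      S.delta i q α q' → PathTo S i q' w q'' → PathTo S i q (α :: w) q''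

lemma pathTo_nil_inv {S : System} {i q r : ℕ} (h : PathTo S i q [] r) : q = r := by
  cases h; rfl

lemma pathTo_cons_inv {S : System} {i q r : ℕ} {α : Act} {u : Trace}
    (h : PathTo S i q (α :: u) r) : ∃ q₁, S.delta i q α q₁ ∧ PathTo S i q₁ u r := by
  cases h with | cons hd tl => exact ⟨_, hd, tl⟩

lemma pathTo_append_split {S : System} {i q r : ℕ} {u v : Trace}
    (h : PathTo S i q (u ++ v) r) : ∃ m, PathTo S i q u m ∧ PathTo S i m v r := by
  induction u generalizing q with
  | nil => exact ⟨q, .nil q, h⟩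
  | cons α u ih =>
    obtain ⟨q₁, hd, tl⟩ := pathTo_cons_inv h
    obtain ⟨m, h1, h2⟩ := ih tl
    exact ⟨m, .cons hd h1, h2⟩

lemma projPeer_cons (M : MessageSet) (i : ℕ) (α : Act) (τ : Trace) :
    projPeer M i (α :: τ) =
      if peerOf M α = i then α :: projPeer M i τ else projPeer M i τ := by
  simp [projPeer, List.filter_cons]

lemma projPeer_append (M : MessageSet) (i : ℕ) (τ τ' : Trace) :
    projPeer M i (τ ++ τ') = projPeer M i τ ++ projPeer M i τ' := by
  simp [projPeer]

lemma exec_pathTo {M : MessageSet} {S : System} {c c' : Config} {τ : Trace}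
    (h : Exec M S c τ c') : ∀ i, PathTo S i (c.1 i) (projPeer M i τ) (c'.1 i) := by
  induction h with
  | refl c => intro i; exact .nil _
  | @step c c' c'' α τ hstep hexec ih =>
    intro i
    rw [projPeer_cons]
    cases α with
    | send a =>
      have hpe : peerOf M (Act.send a) = M.src a := rfl
      by_cases hi : M.src a = i
      · subst hi
        rw [if_pos hpe]
        exact .cons hstep.1 (ih _)
      · rw [if_neg (by rw [hpe]; exact hi)]
        have := hstep.2.1 i (fun h => hi h.symm)
        rw [← this]
        exact ih i
    | recv a =>
      have hpe : peerOf M (Act.recv a) = M.dst a := rfl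
      by_cases hi : M.dst a = i
      · subst hi
        rw [if_pos hpe]
        exact .cons hstep.1 (ih _)
      · rw [if_neg (by rw [hpe]; exact hi)]
        have := hstep.2.1 i (fun h => hi h.symm)
        rw [← this]
        exact ih i

lemma exec_append {M : MessageSet} {S : System} {c c' c'' : Config} {τ τ' : Trace}
    (h : Exec M S c τ c') (h' : Exec M S c' τ' c'') : Exec M S c (τ ++ τ') c'' := by
  induction h with
  | refl => exact h'
  | step hs _ ih => exact .step hs (ih h')

lemma exec_split {M : MessageSet} {S : System} {c c'' : Config} {τ τ' : Trace}
    (h : Exec M S c (τ ++ τ') c'') : ∃ c', Exec M S c τ c' ∧ Exec M S c' τ' c'' := by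
  induction τ generalizing c with
  | nil => exact ⟨c, .refl c, h⟩
  | cons α τ ih =>
    cases h with
    | step hs he =>
      obtain ⟨c', h1, h2⟩ := ih he
      exact ⟨c', .step hs h1, h2⟩

lemma exec_msgs {M : MessageSet} {S : System} (hS : S.WF M) {c c' : Config} {τ : Trace}
    (h : Exec M S c τ c') : ∀ α ∈ τ, α.msg ∈ M.msgs := by
  induction h with
  | refl => simp
  | @step c c' c'' α τ hstep hexec ih =>
    intro β hβ
    rcases List.mem_cons.1 hβ with hβ | hβ
    · subst hβ
      cases β with
      | send a => exact (hS _ _ _ _ hstep.1).2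
      | recv a => exact (hS _ _ _ _ hstep.1).2
    · exact ih β hβ

lemma syncOf_nil : syncOf [] = [] := rfl

lemma syncOf_cons (a : ℕ) (m : List ℕ) :
    syncOf (a :: m) = Act.send a :: Act.recv a :: syncOf m := rfl

lemma syncOf_append (u v : List ℕ) : syncOf (u ++ v) = syncOf u ++ syncOf v := by
  simp [syncOf]

lemma mem_syncOf_send {a : ℕ} {m : List ℕ} (h : a ∈ m) : Act.send a ∈ syncOf m := by
  simp only [syncOf, List.mem_flatMap]
  exact ⟨a, h, by simp⟩

lemma sendProj_append (u v : Trace) : sendProj (u ++ v) = sendProj u ++ sendProj v := by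
  simp [sendProj]

lemma sendProj_syncOf (m : List ℕ) : sendProj (syncOf m) = m := by
  induction m with
  | nil => rfl
  | cons a m ih => simp [syncOf_cons, sendProj, List.filterMap_cons] at *; exact ih

lemma sendProj_send (a : ℕ) : sendProj [Act.send a] = [a] := rfl

lemma sendProj_map_send (l : List ℕ) : sendProj (l.map Act.send) = l := by
  induction l with
  | nil => rfl
  | cons a l ih => simp [sendProj, List.filterMap_cons] at *

lemma recvOn_append (M : MessageSet) (i j : ℕ) (u v : Trace) :
    recvOn M i j (u ++ v) = recvOn M i j u ++ recvOn M i j v := by simp [recvOn]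

lemma sentOn_append (M : MessageSet) (i j : ℕ) (u v : Trace) :
    sentOn M i j (u ++ v) = sentOn M i j u ++ sentOn M i j v := by simp [sentOn]

lemma recvOn_syncOf_eq (M : MessageSet) (i j : ℕ) (u : List ℕ) :
    recvOn M i j (syncOf u) = sentOn M i j (syncOf u) := by
  induction u with
  | nil => rfl
  | cons a u ih =>
    simp only [syncOf_cons, recvOn, sentOn, List.filterMap_cons] at *
    split <;> simp [ih]

lemma prefix_sync_shape : ∀ (w : List ℕ) (τ' : Trace), τ' <+: syncOf w →
    (∃ u, τ' = syncOf u) ∨ (∃ u b, τ' = syncOf u ++ [Act.send b]) := by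
  intro w
  induction w with
  | nil =>
    intro τ' h
    rw [syncOf_nil, List.prefix_nil] at h
    exact Or.inl ⟨[], h⟩
  | cons a w ih =>
    intro τ' h
    rw [syncOf_cons] at h
    rcases τ' with _ | ⟨α, τ₂⟩
    · exact Or.inl ⟨[], rfl⟩
    · rw [List.cons_prefix_cons] at h
      obtain ⟨rfl, h⟩ := h
      rcases τ₂ with _ | ⟨β, τ₃⟩
      · exact Or.inr ⟨[], a, rfl⟩
      · rw [List.cons_prefix_cons] at h
        obtain ⟨rfl, h⟩ := h
        rcases ih τ₃ h with ⟨u, rfl⟩ | ⟨u, b, rfl⟩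
        · exact Or.inl ⟨a :: u, rfl⟩
        · exact Or.inr ⟨a :: u, b, rfl⟩

lemma shape_fifo_bound (M : MessageSet) (i j : ℕ) (τ' : Trace)
    (h : (∃ u, τ' = syncOf u) ∨ (∃ u b, τ' = syncOf u ++ [Act.send b])) :
    recvOn M i j τ' <+: sentOn M i j τ' ∧
      (sentOn M i j τ').length ≤ (recvOn M i j τ').length + 1 := by
  rcases h with ⟨u, rfl⟩ | ⟨u, b, rfl⟩
  · rw [recvOn_syncOf_eq]
    exact ⟨List.prefix_refl _, by omega⟩
  · rw [recvOn_append, sentOn_append, recvOn_syncOf_eq]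
    have h1 : recvOn M i j [Act.send b] = [] := rfl
    have h2 : (sentOn M i j [Act.send b]).length ≤ 1 := by
      simp only [sentOn, List.filterMap_cons, List.filterMap_nil]
      split <;> simp
    rw [h1, List.append_nil]
    constructor
    · exact ⟨sentOn M i j [Act.send b], rfl⟩
    · rw [List.length_append]; omega

lemma bounded_one (M : MessageSet) (w : List ℕ) (a : ℕ) :
    BoundedFifo M 1 (syncOf w ++ [Act.send a]) := by
  have key : ∀ τ' : Trace, τ' <+: syncOf w ++ [Act.send a] →
      (∃ u, τ' = syncOf u) ∨ (∃ u b, τ' = syncOf u ++ [Act.send b]) := by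
    intro τ' h
    rcases (List.prefix_concat_iff.1 h) with h | h
    · exact Or.inr ⟨w, a, h⟩
    · exact prefix_sync_shape w τ' h
  constructor
  · intro τ' h i j
    exact (shape_fifo_bound M i j τ' (key τ' h)).1
  · intro τ' h i j
    exact (shape_fifo_bound M i j τ' (key τ' h)).2

/-- Assembling a synchronous execution from local paths. -/
lemma sync_exec {M : MessageSet} {S : System} : ∀ (m : List ℕ) (f q : ℕ → ℕ),
    (∀ a ∈ m, M.src a ≠ M.dst a) →
    (∀ i, PathTo S i (f i) (projPeer M i (syncOf m)) (q i)) →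
    Exec M S (f, fun _ _ => []) (syncOf m) (q, fun _ _ => []) := by
  intro m
  induction m with
  | nil =>
    intro f q _ hpath
    have : f = q := funext fun i => pathTo_nil_inv (hpath i)
    subst this
    exact .refl _
  | cons a m ih =>
    intro f q hm hpath
    have hst : M.src a ≠ M.dst a := hm a (by simp)
    have hps := hpath (M.src a)
    have hpt := hpath (M.dst a)
    rw [syncOf_cons, projPeer_cons, projPeer_cons,
        if_pos (show peerOf M (Act.send a) = M.src a from rfl),
        if_neg (show ¬ peerOf M (Act.recv a) = M.src a from fun h => hst h.symm)] at hps
    rw [syncOf_cons, projPeer_cons, projPeer_cons,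
        if_neg (show ¬ peerOf M (Act.send a) = M.dst a from hst),
        if_pos (show peerOf M (Act.recv a) = M.dst a from rfl)] at hpt
    obtain ⟨q₁, hd₁, tl₁⟩ := pathTo_cons_inv hps
    obtain ⟨q₂, hd₂, tl₂⟩ := pathTo_cons_inv hpt
    set f₂ : ℕ → ℕ := Function.update (Function.update f (M.src a) q₁) (M.dst a) q₂ with hf₂
    have step1 : Step M S (f, fun _ _ => []) (Act.send a)
        (Function.update f (M.src a) q₁,
          fun k l => if k = M.src a ∧ l = M.dst a then [a] else []) := by
      refine ⟨?_, ?_, ?_, ?_⟩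
      · simpa using hd₁
      · intro k hk; simp [Function.update_of_ne hk]
      · simp
      · intro k l hkl; simp [if_neg hkl]
    have step2 : Step M S
        (Function.update f (M.src a) q₁,
          fun k l => if k = M.src a ∧ l = M.dst a then [a] else [])
        (Act.recv a) (f₂, fun _ _ => []) := by
      refine ⟨?_, ?_, ?_, ?_⟩
      · simpa [hf₂, Function.update_of_ne (Ne.symm hst)] using hd₂
      · intro k hk; simp [hf₂, Function.update_of_ne hk]
      · simp
      · intro k l hkl; simp [if_neg hkl]
    have hrest : Exec M S (f₂, fun _ _ => []) (syncOf m) (q, fun _ _ => []) := by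
      apply ih f₂ q (fun b hb => hm b (by simp [hb]))
      intro i
      by_cases hi : i = M.dst a
      · subst hi; simpa [hf₂] using tl₂
      · by_cases hi' : i = M.src a
        · subst hi'
          simpa [hf₂, Function.update_of_ne hi] using tl₁
        · have := hpath i
          rw [syncOf_cons, projPeer_cons, projPeer_cons] at this
          rw [if_neg (show ¬ peerOf M (Act.send a) = i from fun h => hi' h.symm),
              if_neg (show ¬ peerOf M (Act.recv a) = i from fun h => hi h.symm)] at this
          simpa [hf₂, Function.update_of_ne hi, Function.update_of_ne hi'] using this
    exact .step step1 (.step step2 hrest)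

/-- Sends from a single peer are always executable given a local path. -/
lemma sends_exec {M : MessageSet} {S : System} : ∀ (l : List ℕ) (c : Config) (s q' : ℕ),
    (∀ a ∈ l, M.src a = s) →
    PathTo S s (c.1 s) (l.map Act.send) q' →
    ∃ c', Exec M S c (l.map Act.send) c' := by
  intro l
  induction l with
  | nil => exact fun c _ _ _ _ => ⟨c, .refl c⟩
  | cons a l ih =>
    intro c s q' hs hpath
    have ha : M.src a = s := hs a (by simp)
    subst ha
    obtain ⟨q₁, hd, tl⟩ := pathTo_cons_inv hpath
    set c₁ : Config := (Function.update c.1 (M.src a) q₁,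
      fun k m => if k = M.src a ∧ m = M.dst a then c.2 (M.src a) (M.dst a) ++ [a] else c.2 k m)
      with hc₁
    have step1 : Step M S c (Act.send a) c₁ := by
      refine ⟨?_, ?_, ?_, ?_⟩
      · simpa [hc₁] using hd
      · intro k hk; simp [hc₁, Function.update_of_ne hk]
      · simp [hc₁]
      · intro k m hkm; simp [hc₁, if_neg hkm]
    obtain ⟨c', hexec⟩ := ih c₁ (M.src a) q' (fun b hb => hs b (by simp [hb]))
      (by simpa [hc₁] using tl)
    exact ⟨c', .step step1 hexec⟩

lemma trk_traceOf {M : MessageSet} {S : System} {k : ℕ} {τ : Trace}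
    (h : Trk M S k τ) : TraceOf M S τ := by
  cases k <;> exact h.1

lemma projPeer_map_send_self (M : MessageSet) {l : List ℕ} {s : ℕ}
    (hs : ∀ a ∈ l, M.src a = s) : projPeer M s (l.map Act.send) = l.map Act.send := by
  rw [projPeer, List.filter_eq_self]
  intro α hα
  obtain ⟨a, ha, rfl⟩ := List.mem_map.1 hα
  simp [peerOf, hs a ha]

lemma projPeer_map_send_other (M : MessageSet) {l : List ℕ} {s i : ℕ}
    (hs : ∀ a ∈ l, M.src a = s) (hi : i ≠ s) : projPeer M i (l.map Act.send) = [] := by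
  rw [projPeer, List.filter_eq_nil_iff]
  intro α hα
  obtain ⟨a, ha, rfl⟩ := List.mem_map.1 hα
  simp [peerOf, hs a ha, Ne.symm hi]

/-- The key induction: one message is synchronized at a time. -/
lemma claimC (M : MessageSet) (S : System) (hM : M.WF) (hS : S.WF M)
    (hsync : kSync M S 1) :
    ∀ (l : List ℕ) (w : List ℕ), (∀ a ∈ l, a ∈ M.msgs) →
    (∀ a ∈ l, ∀ b ∈ l, M.src a = M.src b) →
    Trk M S 0 (syncOf w) → TraceOf M S (syncOf w ++ l.map Act.send) →
    Trk M S 0 (syncOf (w ++ l)) := by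
  intro l
  induction l with
  | nil =>
    intro w _ _ h0 _
    simpa using h0
  | cons a l ih =>
    intro w hmem hsrc h0 hT
    set s := M.src a with hsdef
    -- Step 1: τ ++ [!a] is a 1-bounded trace
    have hT1 : TraceOf M S (syncOf w ++ [Act.send a]) := by
      obtain ⟨c, hc⟩ := hT
      rw [show syncOf w ++ (a :: l).map Act.send
          = (syncOf w ++ [Act.send a]) ++ l.map Act.send by simp] at hc
      obtain ⟨c', h1, _⟩ := exec_split hc
      exact ⟨c', h1⟩
    have hTr1 : Trk M S 1 (syncOf w ++ [Act.send a]) := ⟨hT1, bounded_one M w a⟩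
    -- Step 2: via 1-synchronizability, syncOf (w ++ [a]) ∈ Tr₀
    have h0' : Trk M S 0 (syncOf (w ++ [a])) := by
      have hin : Sum.inl (sendProj (syncOf w ++ [Act.send a]))
          ∈ STc M S (Trk M S 1) := Or.inl ⟨_, hTr1, rfl⟩
      rw [← hsync] at hin
      rcases hin with ⟨σ, hσ0, heq⟩ | ⟨σ, c, hσ0, _, _, heq⟩
      · obtain ⟨hσT, mm, rfl⟩ := hσ0
        rw [Sum.inl.injEq, sendProj_append, sendProj_syncOf, sendProj_syncOf,
          sendProj_send] at heq
        rw [heq]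
        exact ⟨hσT, mm, rfl⟩
      · simp at heq
    -- Step 3: assemble an execution of syncOf (w ++ [a]) ++ l.map .send
    obtain ⟨c₁, hc₁⟩ := hT
    obtain ⟨c₂, hc₂⟩ := h0'.1
    have hpaths1 := exec_pathTo hc₁
    have hpaths2 := exec_pathTo hc₂
    have hsa : M.src a ≠ M.dst a := (hM.2 a (hmem a (by simp))).1
    -- peer s path from the old execution, split
    have hps : PathTo S s (S.init s)
        (projPeer M s (syncOf (w ++ [a])) ++ l.map Act.send) (c₁.1 s) := by
      have h1 := hpaths1 s
      rw [projPeer_append] at h1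
      have hms : projPeer M s ((a :: l).map Act.send) = (a :: l).map Act.send :=
        projPeer_map_send_self M (fun b hb => (hsrc b hb a (by simp)))
      rw [hms] at h1
      rw [syncOf_append, projPeer_append, syncOf_cons, syncOf_nil,
        projPeer_cons, projPeer_cons,
        if_pos (show peerOf M (Act.send a) = s from rfl),
        if_neg (show ¬ peerOf M (Act.recv a) = s from fun h => hsa h.symm)]
      simpa [initConfig, show projPeer M s [] = [] from rfl] using h1
    obtain ⟨qs, hqs1, hqs2⟩ := pathTo_append_split hps
    set q : ℕ → ℕ := fun i => if i = s then qs else c₂.1 i with hq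
    have hsyncexec : Exec M S (initConfig S) (syncOf (w ++ [a])) (q, fun _ _ => []) := by
      show Exec M S (S.init, fun _ _ => []) _ _
      apply sync_exec (w ++ [a]) S.init q
      · intro b hb
        rcases List.mem_append.1 hb with hb | hb
        · have hmsg : ∀ α ∈ syncOf w, α.msg ∈ M.msgs := by
            obtain ⟨cw, hcw⟩ := h0.1
            exact exec_msgs hS hcw
          exact (hM.2 b (hmsg _ (mem_syncOf_send hb))).1
        · simp at hb; subst hb; exact hsa
      · intro i
        by_cases hi : i = s
        · subst hi; simpa [hq] using hqs1
        · have := hpaths2 i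
          simpa [hq, hi, initConfig] using this
    have hqss : q s = qs := by simp [hq]
    obtain ⟨c₃, hc₃⟩ := sends_exec l ((q, fun _ _ => []) : Config) s (c₁.1 s)
      (fun b hb => hsrc b (by simp [hb]) a (by simp)) (by rw [show ((q, fun _ _ => []) : Config).1 s = qs from hqss]; exact hqs2)
    have hTnext : TraceOf M S (syncOf (w ++ [a]) ++ l.map Act.send) :=
      ⟨c₃, exec_append hsyncexec hc₃⟩
    have := ih (w ++ [a]) (fun b hb => hmem b (by simp [hb]))
      (fun b hb b' hb' => hsrc b (by simp [hb]) b' (by simp [hb'])) h0' hTnext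
    simpa using this

/-- Lemma 4.4: sends from a single source can be completed into
a synchronous trace. -/
theorem single_source_sends_synchronizable (M : MessageSet) (S : System)
    (hM : M.WF) (hS : S.WF M) (hfin : S.FiniteDelta)
    (hsync : kSync M S 1)
    (τ : Trace) (hτ : Trk M S 0 τ)
    (l : List ℕ) (hmem : ∀ a ∈ l, a ∈ M.msgs)
    (hsrc : ∀ a ∈ l, ∀ b ∈ l, M.src a = M.src b)
    (h : Trk M S l.length (τ ++ l.map Act.send)) :
    Trk M S 0 (τ ++ syncOf l) := by
  obtain ⟨hτT, w, rfl⟩ := hτ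
  have hT : TraceOf M S (syncOf w ++ l.map Act.send) := trk_traceOf h
  have := claimC M S hM hS hsync l w hmem hsrc ⟨hτT, w, rfl⟩ hT
  rw [syncOf_append] at this
  exact this
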